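/- arXiv:2604.26431 — 5 statements merged into one kernel-verified Lean document; each statement's English description precedes it below -/
import Mathlib

section
/- Let T > 0 and let x, x₀, y₀ be real numbers such that not (x = x₀ and y₀/T ∈ ℤ). Then the symmetric partial sums Σ_{N=−M}^{M} (y₀ + N T) / ((x − x₀)² + (y₀ + N T)²) converge as M → ∞ to (π/T) · sin(2π y₀/T) / (cosh(2π (x − x₀)/T) − cos(2π y₀/T)). -/
open Filter Finset Topology

noncomputable section

namespace Stmt5Aux

/-- Partial Euler products for sine. -/
def P (n : ℕ) (z : ℂ) : ℂ := ∏ j ∈ Finset.range n, (1 - z ^ 2 / ((j : ℂ) + 1) ^ 2)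

lemma euler_pointwise {z : ℂ} (hz : z ≠ 0) :
    Tendsto (fun n : ℕ => P n z) atTop
      (𝓝 (Complex.sin ((Real.pi : ℂ) * z) / ((Real.pi : ℂ) * z))) := by
  have hpz : (Real.pi : ℂ) * z ≠ 0 :=
    mul_ne_zero (Complex.ofReal_ne_zero.mpr Real.pi_ne_zero) hz
  have h := (Complex.tendsto_euler_sin_prod z).div_const ((Real.pi : ℂ) * z)
  exact h.congr fun n => mul_div_cancel_left₀ _ hpz

lemma summable_u (R : ℝ) : Summable (fun j : ℕ => R / ((j : ℝ) + 1) ^ 2) := by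
  have h1 : Summable (fun n : ℕ => 1 / ((n : ℝ)) ^ 2) :=
    Real.summable_one_div_nat_pow.mpr one_lt_two
  have h2 : Summable (fun n : ℕ => 1 / (((n : ℝ) + 1)) ^ 2) := by
    have := (summable_nat_add_iff (f := fun n : ℕ => 1 / ((n : ℝ)) ^ 2) 1).mpr h1
    refine this.congr fun n => ?_
    push_cast
    ring
  simpa [div_eq_mul_inv] using h2.mul_left R

lemma natc_ne_zero (j : ℕ) : ((j : ℂ) + 1) ≠ 0 :=
  Nat.cast_add_one_ne_zero j

lemma norm_natc (j : ℕ) : ‖((j : ℂ) + 1)‖ = (j : ℝ) + 1 := by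
  rw [show ((j : ℂ) + 1) = ((j + 1 : ℕ) : ℂ) by push_cast; ring, Complex.norm_natCast]
  push_cast; ring

/-- Uniform convergence of the Euler partial products on a ball around a nonzero point. -/
lemma euler_uniform {x : ℂ} (hx0 : x ≠ 0) :
    TendstoUniformlyOn P
      (fun z => Complex.sin ((Real.pi : ℂ) * z) / ((Real.pi : ℂ) * z)) atTop
      (Metric.ball x (‖x‖ / 2)) := by
  have hxn : 0 < ‖x‖ := norm_pos_iff.mpr hx0
  set r : ℝ := ‖x‖ / 2 with hr
  set s : Set ℂ := Metric.ball x r with hs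
  have hz0 : ∀ z ∈ s, z ≠ 0 := by
    intro z hzs h0
    have h1 : dist z x < r := Metric.mem_ball.mp hzs
    rw [dist_eq_norm, h0, zero_sub, norm_neg] at h1
    rw [hr] at h1; linarith
  have hzR : ∀ z ∈ s, ‖z‖ ≤ 2 * ‖x‖ := by
    intro z hzs
    have h1 : ‖z - x‖ < r := by rw [← dist_eq_norm]; exact Metric.mem_ball.mp hzs
    have h2 : ‖z‖ ≤ ‖x‖ + ‖z - x‖ := by
      calc ‖z‖ = ‖x + (z - x)‖ := by ring_nf
      _ ≤ ‖x‖ + ‖z - x‖ := norm_add_le _ _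
    rw [hr] at h1; linarith
  set u : ℕ → ℝ := fun j => (2 * ‖x‖) ^ 2 / ((j : ℝ) + 1) ^ 2 with hu_def
  have hu : Summable u := summable_u _
  have hu0 : ∀ j, 0 ≤ u j := fun j => by rw [hu_def]; positivity
  have hterm_le : ∀ z ∈ s, ∀ j : ℕ, ‖z ^ 2 / ((j : ℂ) + 1) ^ 2‖ ≤ u j := by
    intro z hzs j
    rw [norm_div, norm_pow, norm_pow, norm_natc j, hu_def]
    rw [div_le_div_iff_of_pos_right (by positivity)]
    exact pow_le_pow_left₀ (norm_nonneg z) (hzR z hzs) 2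
  have hfac_le : ∀ z ∈ s, ∀ j : ℕ, ‖1 - z ^ 2 / ((j : ℂ) + 1) ^ 2‖ ≤ 1 + u j := by
    intro z hzs j
    calc ‖1 - z ^ 2 / ((j : ℂ) + 1) ^ 2‖ ≤ ‖(1 : ℂ)‖ + ‖z ^ 2 / ((j : ℂ) + 1) ^ 2‖ :=
          norm_sub_le _ _
    _ ≤ 1 + u j := by rw [norm_one]; linarith [hterm_le z hzs j]
  set E : ℝ := Real.exp (∑' j, u j) with hE
  have hE0 : 0 ≤ E := (Real.exp_pos _).le
  have hPbound : ∀ z ∈ s, ∀ n, ‖P n z‖ ≤ E := by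
    intro z hzs n
    calc ‖P n z‖ = ∏ j ∈ range n, ‖1 - z ^ 2 / ((j : ℂ) + 1) ^ 2‖ := by
          rw [P]; exact norm_prod _ _
    _ ≤ ∏ j ∈ range n, (1 + u j) :=
          Finset.prod_le_prod (fun j _ => norm_nonneg _) (fun j _ => hfac_le z hzs j)
    _ ≤ ∏ j ∈ range n, Real.exp (u j) :=
          Finset.prod_le_prod (fun j _ => by positivity)
            (fun j _ => by linarith [Real.add_one_le_exp (u j)])
    _ = Real.exp (∑ j ∈ range n, u j) := (Real.exp_sum _ _).symm
    _ ≤ E := Real.exp_le_exp.mpr (Summable.sum_le_tsum _ (fun j _ => hu0 j) hu)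
  have hstep : ∀ z ∈ s, ∀ k, ‖P (k + 1) z - P k z‖ ≤ E * u k := by
    intro z hzs k
    have h1 : P (k + 1) z - P k z = P k z * (-(z ^ 2 / ((k : ℂ) + 1) ^ 2)) := by
      rw [P, P, Finset.prod_range_succ]; ring
    rw [h1, norm_mul, norm_neg]
    exact mul_le_mul (hPbound z hzs k) (hterm_le z hzs k) (norm_nonneg _) hE0
  have hdiff_sum : ∀ z ∈ s, ∀ m n : ℕ, n ≤ m →
      ‖P m z - P n z‖ ≤ ∑ k ∈ Finset.Ico n m, E * u k := by
    intro z hzs m n hnm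
    have h1 : P m z - P n z = ∑ k ∈ Finset.Ico n m, (P (k + 1) z - P k z) := by
      rw [Finset.sum_Ico_eq_sub _ hnm, Finset.sum_range_sub (fun k => P k z),
        Finset.sum_range_sub (fun k => P k z)]
      ring
    rw [h1]
    exact (norm_sum_le _ _).trans (Finset.sum_le_sum fun k _ => hstep z hzs k)
  have hEu : Summable (fun k => E * u k) := hu.mul_left E
  have hEu0 : ∀ k, 0 ≤ E * u k := fun k => mul_nonneg hE0 (hu0 k)
  have hcauchy : UniformCauchySeqOn P atTop s := by
    rw [Metric.uniformCauchySeqOn_iff]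
    intro ε hε
    have hC : CauchySeq (fun n => ∑ k ∈ range n, E * u k) :=
      hEu.hasSum.tendsto_sum_nat.cauchySeq
    obtain ⟨N, hN⟩ := Metric.cauchySeq_iff.mp hC ε hε
    refine ⟨N, fun m hm n hn z hzs => ?_⟩
    rw [dist_eq_norm]
    rcases le_total n m with hle | hle
    · have h1 := hdiff_sum z hzs m n hle
      have h2 : ∑ k ∈ Finset.Ico n m, E * u k
          = (∑ k ∈ range m, E * u k) - ∑ k ∈ range n, E * u k :=
        Finset.sum_Ico_eq_sub _ hle
      have h3 := hN m hm n hn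
      rw [Real.dist_eq] at h3
      have h4 : (∑ k ∈ range m, E * u k) - ∑ k ∈ range n, E * u k
          ≤ |(∑ k ∈ range m, E * u k) - ∑ k ∈ range n, E * u k| := le_abs_self _
      linarith
    · have h1 := hdiff_sum z hzs n m hle
      have h2 : ∑ k ∈ Finset.Ico m n, E * u k
          = (∑ k ∈ range n, E * u k) - ∑ k ∈ range m, E * u k :=
        Finset.sum_Ico_eq_sub _ hle
      have h3 := hN n hn m hm
      rw [Real.dist_eq] at h3
      have h4 : (∑ k ∈ range n, E * u k) - ∑ k ∈ range m, E * u k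
          ≤ |(∑ k ∈ range n, E * u k) - ∑ k ∈ range m, E * u k| := le_abs_self _
      rw [norm_sub_rev]
      linarith
  exact hcauchy.tendstoUniformlyOn_of_tendsto fun z hzs => euler_pointwise (hz0 z hzs)

/-- Per-factor logarithmic derivative. -/
lemma logDeriv_factor {x : ℂ} (j : ℕ) (hc : x ≠ ((j : ℂ) + 1)) (hc' : x ≠ -((j : ℂ) + 1)) :
    logDeriv (fun z : ℂ => 1 - z ^ 2 / ((j : ℂ) + 1) ^ 2) x
      = 1 / (x - ((j : ℂ) + 1)) + 1 / (x + ((j : ℂ) + 1)) := by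
  have hj1 : ((j : ℂ) + 1) ≠ 0 := natc_ne_zero j
  have hd : HasDerivAt (fun z : ℂ => 1 - z ^ 2 / ((j : ℂ) + 1) ^ 2)
      (-((2 : ℕ) * x ^ (2 - 1) / ((j : ℂ) + 1) ^ 2)) x :=
    ((hasDerivAt_pow 2 x).div_const _).const_sub 1
  have hxc : x - ((j : ℂ) + 1) ≠ 0 := sub_ne_zero.mpr hc
  have hxc' : x + ((j : ℂ) + 1) ≠ 0 := by
    intro hz; exact hc' (eq_neg_of_add_eq_zero_left hz)
  have hden : (1 - x ^ 2 / ((j : ℂ) + 1) ^ 2) ≠ 0 := by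
    intro hzero
    have h2 : x ^ 2 = ((j : ℂ) + 1) ^ 2 := by
      field_simp at hzero
      linear_combination -hzero
    have h3 : (x - ((j : ℂ) + 1)) * (x + ((j : ℂ) + 1)) = 0 := by linear_combination h2
    rcases mul_eq_zero.mp h3 with h4 | h4
    · exact hxc h4
    · exact hxc' h4
  rw [logDeriv_apply, hd.deriv, div_eq_iff hden]
  field_simp
  ring

lemma sin_pi_ne {x : ℂ} (hx : ∀ n : ℤ, x ≠ (n : ℂ)) :
    Complex.sin ((Real.pi : ℂ) * x) ≠ 0 := by
  have hπ : (Real.pi : ℂ) ≠ 0 := Complex.ofReal_ne_zero.mpr Real.pi_ne_zero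
  rw [Ne, Complex.sin_eq_zero_iff]
  rintro ⟨k, hk⟩
  have : x = (k : ℂ) := by
    have h1 : (Real.pi : ℂ) * x = (Real.pi : ℂ) * (k : ℂ) := by rw [hk]; ring
    exact mul_left_cancel₀ hπ h1
  exact hx k this

/-- Mittag-Leffler expansion of the cotangent, as a limit of symmetric partial sums. -/
theorem tendsto_pair_sum {x : ℂ} (hx : ∀ n : ℤ, x ≠ (n : ℂ)) :
    Tendsto (fun M : ℕ => ∑ j ∈ Finset.range M,
        (1 / (x - ((j : ℂ) + 1)) + 1 / (x + ((j : ℂ) + 1)))) atTop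
      (𝓝 ((Real.pi : ℂ) * Complex.cot ((Real.pi : ℂ) * x) - 1 / x)) := by
  have hπ : (Real.pi : ℂ) ≠ 0 := Complex.ofReal_ne_zero.mpr Real.pi_ne_zero
  have hx0 : x ≠ 0 := by simpa using hx 0
  have hxn : 0 < ‖x‖ := norm_pos_iff.mpr hx0
  set s : Set ℂ := Metric.ball x (‖x‖ / 2) with hs
  have hopen : IsOpen s := Metric.isOpen_ball
  have hxs : x ∈ s := Metric.mem_ball_self (by positivity)
  have hTU := euler_uniform hx0
  have hsin : Complex.sin ((Real.pi : ℂ) * x) ≠ 0 := sin_pi_ne hx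
  have hgx : Complex.sin ((Real.pi : ℂ) * x) / ((Real.pi : ℂ) * x) ≠ 0 :=
    div_ne_zero hsin (mul_ne_zero hπ hx0)
  have hdiffP : ∀ᶠ n in atTop, DifferentiableOn ℂ (P n) s := by
    refine Eventually.of_forall fun n => ?_
    refine DifferentiableOn.fun_finsetProd (𝕜 := ℂ) fun j _ => ?_
    exact (((differentiable_pow 2).div_const _).const_sub 1).differentiableOn
  have hlog := Complex.logDeriv_tendsto (f := P)
      (g := fun z => Complex.sin ((Real.pi : ℂ) * z) / ((Real.pi : ℂ) * z)) hopen
      hxs hTU.tendstoLocallyUniformlyOn hdiffP hgx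
  have hcnum : ∀ j : ℕ, x ≠ ((j : ℂ) + 1) := by
    intro j hc
    exact hx ((j : ℤ) + 1) (by push_cast at hc ⊢; exact hc)
  have hcnum' : ∀ j : ℕ, x ≠ -((j : ℂ) + 1) := by
    intro j hc
    exact hx (-((j : ℤ) + 1)) (by push_cast at hc ⊢; exact hc)
  have hne : ∀ j : ℕ, (1 - x ^ 2 / ((j : ℂ) + 1) ^ 2) ≠ 0 := by
    intro j hzero
    have hj1 : ((j : ℂ) + 1) ≠ 0 := natc_ne_zero j
    have h2 : x ^ 2 = ((j : ℂ) + 1) ^ 2 := by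
      field_simp at hzero
      linear_combination -hzero
    have h3 : (x - ((j : ℂ) + 1)) * (x + ((j : ℂ) + 1)) = 0 := by linear_combination h2
    rcases mul_eq_zero.mp h3 with h4 | h4
    · exact hcnum j (by linear_combination h4)
    · exact hcnum' j (by linear_combination h4)
  have hPlog : ∀ n : ℕ, logDeriv (P n) x
      = ∑ j ∈ Finset.range n, (1 / (x - ((j : ℂ) + 1)) + 1 / (x + ((j : ℂ) + 1))) := by
    intro n
    have h1 : logDeriv (P n) x
        = ∑ j ∈ Finset.range n, logDeriv (fun z : ℂ => 1 - z ^ 2 / ((j : ℂ) + 1) ^ 2) x := by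
      exact logDeriv_prod (s := Finset.range n) (x := x) (fun j _ => hne j)
        (fun j _ => (((differentiable_pow 2).div_const _).const_sub 1).differentiableAt)
    rw [h1]
    exact Finset.sum_congr rfl fun j _ => logDeriv_factor j (hcnum j) (hcnum' j)
  have hdsin : HasDerivAt (fun t : ℂ => Complex.sin ((Real.pi : ℂ) * t))
      (Complex.cos ((Real.pi : ℂ) * x) * (Real.pi : ℂ)) x := by
    have h1 : HasDerivAt (fun t : ℂ => (Real.pi : ℂ) * t) ((Real.pi : ℂ)) x := by
      simpa using (hasDerivAt_id x).const_mul ((Real.pi : ℂ))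
    exact (Complex.hasDerivAt_sin ((Real.pi : ℂ) * x)).comp x h1
  have hdlin : HasDerivAt (fun t : ℂ => (Real.pi : ℂ) * t) ((Real.pi : ℂ)) x := by
    simpa using (hasDerivAt_id x).const_mul ((Real.pi : ℂ))
  have hglog : logDeriv (fun z => Complex.sin ((Real.pi : ℂ) * z) / ((Real.pi : ℂ) * z)) x
      = (Real.pi : ℂ) * Complex.cot ((Real.pi : ℂ) * x) - 1 / x := by
    rw [logDeriv_div x hsin (mul_ne_zero hπ hx0) hdsin.differentiableAt
      hdlin.differentiableAt]
    rw [logDeriv_apply, logDeriv_apply, hdsin.deriv, hdlin.deriv,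
      Complex.cot_eq_cos_div_sin]
    field_simp
  rw [hglog] at hlog
  exact hlog.congr hPlog

/-- Splitting a symmetric integer-interval sum. -/
lemma sum_Icc_eq (F : ℤ → ℂ) (M : ℕ) :
    ∑ N ∈ Finset.Icc (-(M : ℤ)) (M : ℤ), F N
      = F 0 + ∑ j ∈ Finset.range M, (F (-((j : ℤ) + 1)) + F ((j : ℤ) + 1)) := by
  induction M with
  | zero => simp
  | succ M ih =>
    have hins : Finset.Icc (-((M : ℤ) + 1)) ((M : ℤ) + 1)
        = insert (-((M : ℤ) + 1)) (insert ((M : ℤ) + 1) (Finset.Icc (-(M : ℤ)) (M : ℤ))) := by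
      ext n
      simp only [Finset.mem_Icc, Finset.mem_insert]
      omega
    have hc1 : ((M + 1 : ℕ) : ℤ) = (M : ℤ) + 1 := by push_cast; ring
    rw [show (-(((M + 1 : ℕ)) : ℤ)) = -((M : ℤ) + 1) by rw [hc1], hc1, hins,
      Finset.sum_insert (by simp only [Finset.mem_insert, Finset.mem_Icc]; omega),
      Finset.sum_insert (by simp only [Finset.mem_Icc]; omega), ih,
      Finset.sum_range_succ]
    ring

lemma re_cot (u v : ℝ) (h : Real.sin u ≠ 0 ∨ Real.sinh v ≠ 0) :
    (Complex.cot ((u : ℂ) + (v : ℂ) * Complex.I)).re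
      = Real.sin u * Real.cos u / (Real.sin u ^ 2 + Real.sinh v ^ 2) := by
  have hD : 0 < Real.sin u ^ 2 + Real.sinh v ^ 2 := by
    rcases h with h | h <;> positivity
  have hsin : Complex.sin ((u : ℂ) + (v : ℂ) * Complex.I)
      = ((Real.sin u * Real.cosh v : ℝ) : ℂ) + ((Real.cos u * Real.sinh v : ℝ) : ℂ) * Complex.I := by
    rw [Complex.sin_add_mul_I, ← Complex.ofReal_sin, ← Complex.ofReal_cos,
      ← Complex.ofReal_sinh, ← Complex.ofReal_cosh]
    push_cast
    ring
  have hcos : Complex.cos ((u : ℂ) + (v : ℂ) * Complex.I)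
      = ((Real.cos u * Real.cosh v : ℝ) : ℂ) + ((-(Real.sin u * Real.sinh v) : ℝ) : ℂ) * Complex.I := by
    rw [Complex.cos_add_mul_I, ← Complex.ofReal_sin, ← Complex.ofReal_cos,
      ← Complex.ofReal_sinh, ← Complex.ofReal_cosh]
    push_cast
    ring
  have hc2 : Real.cosh v ^ 2 = Real.sinh v ^ 2 + 1 := Real.cosh_sq v
  have hs2 : Real.sin u ^ 2 + Real.cos u ^ 2 = 1 := Real.sin_sq_add_cos_sq u
  have hN : (Real.sin u * Real.cosh v) ^ 2 + (Real.cos u * Real.sinh v) ^ 2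
      = Real.sin u ^ 2 + Real.sinh v ^ 2 := by nlinarith
  rw [Complex.cot_eq_cos_div_sin, hcos, hsin, Complex.div_re]
  simp only [Complex.add_re, Complex.add_im, Complex.ofReal_re, Complex.ofReal_im,
    Complex.mul_re, Complex.mul_im, Complex.I_re, Complex.I_im, Complex.normSq_apply,
    mul_zero, mul_one, zero_mul, sub_zero, zero_add, add_zero, zero_sub]
  rw [show (Real.sin u * Real.cosh v) * (Real.sin u * Real.cosh v)
      + (Real.cos u * Real.sinh v) * (Real.cos u * Real.sinh v)
      = Real.sin u ^ 2 + Real.sinh v ^ 2 by nlinarith]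
  field_simp
  linear_combination (Real.sin u * Real.cos u) * hc2

end Stmt5Aux
/-- The closed form of the periodic monopole sum P_∞ (Appendix B): the
Cauchy-principal-value sum over the period-T lattice of Lorentzian terms
converges to (π/T)·sin(2πy₀/T)/(cosh(2π(x−x₀)/T) − cos(2πy₀/T)). -/
theorem stmt_5 (T x x₀ y₀ : ℝ) (hT : 0 < T)
    (h : ¬(x = x₀ ∧ ∃ n : ℤ, y₀ / T = (n : ℝ))) :
    Filter.Tendsto
      (fun M : ℕ => ∑ N ∈ Finset.Icc (-(M : ℤ)) (M : ℤ),
        (y₀ + (N : ℝ) * T) / ((x - x₀) ^ 2 + (y₀ + (N : ℝ) * T) ^ 2))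
      Filter.atTop
      (nhds ((Real.pi / T) * Real.sin (2 * Real.pi * y₀ / T) /
        (Real.cosh (2 * Real.pi * (x - x₀) / T) - Real.cos (2 * Real.pi * y₀ / T)))) := by
  have hT0 : T ≠ 0 := ne_of_gt hT
  have hπ0 : Real.pi ≠ 0 := Real.pi_ne_zero
  set w : ℂ := ((y₀ / T : ℝ) : ℂ) + ((-((x - x₀) / T) : ℝ) : ℂ) * Complex.I with hw_def
  have hw : ∀ n : ℤ, w ≠ (n : ℂ) := by
    intro n hn
    apply h
    have h1 : w.re = (n : ℝ) := by rw [hn]; simp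
    have h2 : w.im = 0 := by rw [hn]; simp
    rw [hw_def] at h1 h2
    simp at h1 h2
    have hxx : x = x₀ := by
      rcases h2 with h2 | h2
      · linarith
      · exact absurd h2 hT0
    exact ⟨hxx, n, h1⟩
  have hwN : ∀ N : ℤ, w + (N : ℂ) ≠ 0 := by
    intro N hc
    apply hw (-N)
    have hh : w = -(N : ℂ) := eq_neg_of_add_eq_zero_left hc
    rw [hh]; push_cast; ring
  have hterm : ∀ N : ℤ, (y₀ + (N : ℝ) * T) / ((x - x₀) ^ 2 + (y₀ + (N : ℝ) * T) ^ 2)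
      = (1 / T) * ((1 / (w + (N : ℂ))).re) := by
    intro N
    have hre : (w + (N : ℂ)).re = y₀ / T + (N : ℝ) := by rw [hw_def]; simp
    have him : (w + (N : ℂ)).im = -((x - x₀) / T) := by rw [hw_def]; simp
    have hD : (y₀ / T + (N : ℝ)) ^ 2 + ((x - x₀) / T) ^ 2 ≠ 0 := by
      intro h0
      apply hwN N
      have h1 : y₀ / T + (N : ℝ) = 0 := by
        nlinarith [sq_nonneg (y₀ / T + (N : ℝ)), sq_nonneg ((x - x₀) / T)]
      have h2 : (x - x₀) / T = 0 := by
        nlinarith [sq_nonneg (y₀ / T + (N : ℝ)), sq_nonneg ((x - x₀) / T)]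
      apply Complex.ext
      · rw [hre, h1]; simp
      · rw [him, h2]; simp
    have hD2 : (x - x₀) ^ 2 + (y₀ + (N : ℝ) * T) ^ 2 ≠ 0 := by
      intro h0
      apply hD
      have h1 : y₀ + (N : ℝ) * T = 0 := by
        nlinarith [sq_nonneg (x - x₀), sq_nonneg (y₀ + (N : ℝ) * T)]
      have h2 : x - x₀ = 0 := by
        nlinarith [sq_nonneg (x - x₀), sq_nonneg (y₀ + (N : ℝ) * T)]
      have e1 : y₀ / T + (N : ℝ) = (y₀ + (N : ℝ) * T) / T := by field_simp
      rw [e1, h1, h2]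
      simp
    have e1 : y₀ / T + (N : ℝ) = (y₀ + (N : ℝ) * T) / T := by field_simp
    have e2 : (y₀ / T + (N : ℝ)) * (y₀ / T + (N : ℝ))
        + (-((x - x₀) / T)) * (-((x - x₀) / T))
        = ((x - x₀) ^ 2 + (y₀ + (N : ℝ) * T) ^ 2) / T ^ 2 := by
      field_simp
      ring
    rw [show (1:ℂ)/(w + (N:ℂ)) = (w + (N:ℂ))⁻¹ from one_div _,
      Complex.inv_re, Complex.normSq_apply, hre, him, e2, e1]
    rw [div_div_div_eq]
    field_simp
  have hsum : ∀ M : ℕ,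
      (∑ N ∈ Finset.Icc (-(M : ℤ)) (M : ℤ),
        (y₀ + (N : ℝ) * T) / ((x - x₀) ^ 2 + (y₀ + (N : ℝ) * T) ^ 2))
      = (1 / T) * ((∑ N ∈ Finset.Icc (-(M : ℤ)) (M : ℤ), 1 / (w + (N : ℂ))).re) := by
    intro M
    rw [Complex.re_sum, Finset.mul_sum]
    exact Finset.sum_congr rfl fun N _ => hterm N
  have hsplit : ∀ M : ℕ, (∑ N ∈ Finset.Icc (-(M : ℤ)) (M : ℤ), 1 / (w + (N : ℂ)))
      = 1 / w + ∑ j ∈ Finset.range M,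
          (1 / (w - ((j : ℂ) + 1)) + 1 / (w + ((j : ℂ) + 1))) := by
    intro M
    rw [Stmt5Aux.sum_Icc_eq (fun N => 1 / (w + (N : ℂ))) M]
    congr 1
    · norm_num
    · refine Finset.sum_congr rfl fun j _ => ?_
      push_cast
      ring
  have hpair := Stmt5Aux.tendsto_pair_sum hw
  have hc : Filter.Tendsto
      (fun M : ℕ => ∑ N ∈ Finset.Icc (-(M : ℤ)) (M : ℤ), 1 / (w + (N : ℂ)))
      Filter.atTop (nhds ((Real.pi : ℂ) * Complex.cot ((Real.pi : ℂ) * w))) := by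
    have h1 := hpair.const_add (1 / w)
    rw [show 1 / w + ((Real.pi : ℂ) * Complex.cot ((Real.pi : ℂ) * w) - 1 / w)
        = (Real.pi : ℂ) * Complex.cot ((Real.pi : ℂ) * w) by ring] at h1
    exact h1.congr fun M => (hsplit M).symm
  have hre : Filter.Tendsto (fun M : ℕ =>
      (1 / T) * ((∑ N ∈ Finset.Icc (-(M : ℤ)) (M : ℤ), 1 / (w + (N : ℂ))).re))
      Filter.atTop
      (nhds ((1 / T) * ((Real.pi : ℂ) * Complex.cot ((Real.pi : ℂ) * w)).re)) :=
    ((Complex.continuous_re.tendsto _).comp hc).const_mul (1 / T)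
  set u : ℝ := Real.pi * (y₀ / T) with hu_def
  set v : ℝ := -(Real.pi * ((x - x₀) / T)) with hv_def
  have hθ : (Real.pi : ℂ) * w = (u : ℂ) + (v : ℂ) * Complex.I := by
    rw [hw_def, hu_def, hv_def]; push_cast; ring
  have hAS : Real.sin u ≠ 0 ∨ Real.sinh v ≠ 0 := by
    by_cases hxx : x = x₀
    · left
      intro h0
      obtain ⟨n, hn⟩ := Real.sin_eq_zero_iff.mp h0
      apply h
      refine ⟨hxx, n, ?_⟩
      rw [hu_def] at hn
      have h2 : Real.pi * (n : ℝ) = Real.pi * (y₀ / T) := by linarith [hn]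
      exact (mul_left_cancel₀ hπ0 h2).symm
    · right
      rw [hv_def, Real.sinh_ne_zero]
      intro h0
      apply hxx
      have h1 : (x - x₀) / T = 0 := by
        rcases mul_eq_zero.mp (neg_eq_zero.mp h0) with h2 | h2
        · exact absurd h2 hπ0
        · exact h2
      have h2 := (div_eq_zero_iff.mp h1).resolve_right hT0
      linarith
  have hval : (1 / T) * ((Real.pi : ℂ) * Complex.cot ((Real.pi : ℂ) * w)).re
      = (Real.pi / T) * Real.sin (2 * Real.pi * y₀ / T) /
        (Real.cosh (2 * Real.pi * (x - x₀) / T) - Real.cos (2 * Real.pi * y₀ / T)) := by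
    rw [hθ, Complex.re_ofReal_mul, Stmt5Aux.re_cot u v hAS]
    have e1 : 2 * Real.pi * y₀ / T = 2 * u := by rw [hu_def]; ring
    have e2 : 2 * Real.pi * (x - x₀) / T = -(2 * v) := by rw [hv_def]; ring
    rw [e1, e2, Real.cosh_neg, Real.sin_two_mul, Real.cos_two_mul', Real.cosh_two_mul]
    have hc2 : Real.cosh v ^ 2 = Real.sinh v ^ 2 + 1 := Real.cosh_sq v
    have hs2 : Real.sin u ^ 2 + Real.cos u ^ 2 = 1 := Real.sin_sq_add_cos_sq u
    have hD : 0 < Real.sin u ^ 2 + Real.sinh v ^ 2 := by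
      rcases hAS with h' | h' <;> positivity
    have hden : Real.cosh v ^ 2 + Real.sinh v ^ 2 - (Real.cos u ^ 2 - Real.sin u ^ 2)
        = 2 * (Real.sin u ^ 2 + Real.sinh v ^ 2) := by nlinarith
    rw [hden]
    field_simp [hD.ne', hT0]
  rw [← hval]
  exact hre.congr fun M => (hsum M).symm
end
end

section
/- Let a₁ > 0 and b₁ > 0, set u = a₁/b₁, ω₁ = 6 a₁ b₁ and μ = 2(u² − 1)/(1 + u²). Then the improper integral ∫_{−∞}^{∞} (2ω₁²/(a₁² + b₁²)) · e^{2ω₁ x} / (e^{4ω₁ x} + μ e^{2ω₁ x} + 1) dx converges and equals 3[π/2 − arctan((u² − 1)/(2u))] = 3(π − 2 arctan u). -/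
open MeasureTheory Real Filter Set Topology

private lemma soliton_helper (C k m c : ℝ) (hC : 0 ≤ C) (hk : 0 < k) (hc : 0 < c) :
    Integrable (fun x : ℝ => C * Real.exp (k * x) / ((Real.exp (k * x) + m) ^ 2 + c ^ 2)) ∧
    (∫ x : ℝ, C * Real.exp (k * x) / ((Real.exp (k * x) + m) ^ 2 + c ^ 2))
      = C / (k * c) * (π / 2 - arctan (m / c)) := by
  set f : ℝ → ℝ := fun x => C * Real.exp (k * x) / ((Real.exp (k * x) + m) ^ 2 + c ^ 2) with hf
  set g : ℝ → ℝ := fun x => C / (k * c) * arctan ((Real.exp (k * x) + m) / c) with hg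
  have hc' : c ≠ 0 := hc.ne'
  have hk' : k ≠ 0 := hk.ne'
  have hderiv : ∀ x : ℝ, HasDerivAt g (f x) x := by
    intro x
    have h1 : HasDerivAt (fun x : ℝ => k * x) k x := by
      simpa using (hasDerivAt_id x).const_mul k
    have h2 : HasDerivAt (fun x : ℝ => (Real.exp (k * x) + m) / c)
        (Real.exp (k * x) * k / c) x :=
      (((Real.hasDerivAt_exp (k * x)).comp x h1).add_const m).div_const c
    have h3 := (Real.hasDerivAt_arctan ((Real.exp (k * x) + m) / c)).comp x h2
    have h4 := h3.const_mul (C / (k * c))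
    refine h4.congr_deriv ?_
    have hd : 0 < (Real.exp (k * x) + m) ^ 2 + c ^ 2 := by positivity
    rw [hf]
    field_simp
    ring
  have hnonneg : ∀ x : ℝ, 0 ≤ f x := by
    intro x
    have hd : 0 < (Real.exp (k * x) + m) ^ 2 + c ^ 2 := by positivity
    rw [hf]
    positivity
  have htop : Tendsto g atTop (𝓝 (C / (k * c) * (π / 2))) := by
    have h1 : Tendsto (fun x : ℝ => k * x) atTop atTop :=
      tendsto_id.const_mul_atTop hk
    have h2 : Tendsto (fun x : ℝ => (Real.exp (k * x) + m) / c) atTop atTop :=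
      ((tendsto_atTop_add_const_right _ m (Real.tendsto_exp_atTop.comp h1)).atTop_div_const hc)
    exact ((tendsto_arctan_atTop.mono_right nhdsWithin_le_nhds).comp h2).const_mul _
  have hbot : Tendsto g atBot (𝓝 (C / (k * c) * arctan (m / c))) := by
    have h1 : Tendsto (fun x : ℝ => k * x) atBot atBot :=
      tendsto_id.const_mul_atBot hk
    have h2 : Tendsto (fun x : ℝ => Real.exp (k * x)) atBot (𝓝 0) :=
      Real.tendsto_exp_atBot.comp h1
    have h3 : Tendsto (fun x : ℝ => (Real.exp (k * x) + m) / c) atBot (𝓝 (m / c)) := by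
      have := (h2.add_const m).div_const c
      simpa using this
    exact (Real.continuous_arctan.continuousAt.tendsto.comp h3).const_mul _
  have hIoi : IntegrableOn f (Ioi 0) :=
    integrableOn_Ioi_deriv_of_nonneg' (fun x _ => hderiv x) (fun x _ => hnonneg x) htop
  have hderiv2 : ∀ x : ℝ, HasDerivAt (fun y : ℝ => -g (-y)) (f (-x)) x := by
    intro x
    have h1 : HasDerivAt (fun y : ℝ => -y) (-1 : ℝ) x := hasDerivAt_neg x
    have h2 := ((hderiv (-x)).comp x h1).neg
    exact h2.congr_deriv (by ring)
  have htop2 : Tendsto (fun y : ℝ => -g (-y)) atTop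
      (𝓝 (-(C / (k * c) * arctan (m / c)))) :=
    (hbot.comp tendsto_neg_atTop_atBot).neg
  have hIoi2 : IntegrableOn (fun y : ℝ => f (-y)) (Ioi 0) :=
    integrableOn_Ioi_deriv_of_nonneg' (fun x _ => hderiv2 x) (fun x _ => hnonneg _) htop2
  have hIio : IntegrableOn f (Iio 0) := by
    have key := (MeasurePreserving.integrableOn_comp_preimage
      (Measure.measurePreserving_neg (volume : Measure ℝ))
      (Homeomorph.neg ℝ).measurableEmbedding (f := f) (s := Iio (0 : ℝ)))
    refine key.1 ?_
    have hset : ((Neg.neg : ℝ → ℝ) ⁻¹' Iio (0 : ℝ)) = Ioi 0 := by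
      ext x; simp
    rw [hset]
    exact hIoi2.congr_fun (fun x _ => rfl) measurableSet_Ioi
  have hInt : Integrable f := by
    rw [← integrableOn_univ, ← Iio_union_Ici (a := (0 : ℝ))]
    exact hIio.union ((integrableOn_Ici_iff_integrableOn_Ioi (by simp)).2 hIoi)
  refine ⟨hInt, ?_⟩
  have := integral_of_hasDerivAt_of_tendsto hderiv hInt hbot htop
  rw [this]
  ring

/-- The total phase shift of the single-hump bright soliton (Section IV):
with u = a₁/b₁, ω₁ = 6a₁b₁, μ = 2(u²−1)/(1+u²),
∫_{−∞}^{∞} (2ω₁²/(a₁²+b₁²)) e^{2ω₁x}/(e^{4ω₁x} + μe^{2ω₁x} + 1) dx converges and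
equals 3[π/2 − arctan((u²−1)/(2u))] = 3(π − 2 arctan u). -/
theorem stmt_11 (a₁ b₁ u ω₁ μ : ℝ) (ha : 0 < a₁) (hb : 0 < b₁)
    (hu : u = a₁ / b₁) (hω : ω₁ = 6 * a₁ * b₁)
    (hμ : μ = 2 * (u ^ 2 - 1) / (1 + u ^ 2)) :
    Integrable (fun x : ℝ => (2 * ω₁ ^ 2 / (a₁ ^ 2 + b₁ ^ 2)) * Real.exp (2 * ω₁ * x) /
      (Real.exp (4 * ω₁ * x) + μ * Real.exp (2 * ω₁ * x) + 1)) ∧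
    (∫ x : ℝ, (2 * ω₁ ^ 2 / (a₁ ^ 2 + b₁ ^ 2)) * Real.exp (2 * ω₁ * x) /
      (Real.exp (4 * ω₁ * x) + μ * Real.exp (2 * ω₁ * x) + 1)) =
      3 * (Real.pi / 2 - Real.arctan ((u ^ 2 - 1) / (2 * u))) ∧
    3 * (Real.pi / 2 - Real.arctan ((u ^ 2 - 1) / (2 * u))) =
      3 * (Real.pi - 2 * Real.arctan u) := by
  have hu0 : 0 < u := by rw [hu]; positivity
  have h1u : (0 : ℝ) < 1 + u ^ 2 := by positivity
  have hC : 0 ≤ 2 * ω₁ ^ 2 / (a₁ ^ 2 + b₁ ^ 2) := by positivity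
  have hk : 0 < 2 * ω₁ := by rw [hω]; positivity
  set c : ℝ := 2 * u / (1 + u ^ 2) with hcdef
  set m : ℝ := (u ^ 2 - 1) / (1 + u ^ 2) with hmdef
  have hc : 0 < c := by rw [hcdef]; positivity
  obtain ⟨hint, hval⟩ :=
    soliton_helper (2 * ω₁ ^ 2 / (a₁ ^ 2 + b₁ ^ 2)) (2 * ω₁) m c hC hk hc
  have heq : ∀ x : ℝ,
      (2 * ω₁ ^ 2 / (a₁ ^ 2 + b₁ ^ 2)) * Real.exp (2 * ω₁ * x) /
        (Real.exp (4 * ω₁ * x) + μ * Real.exp (2 * ω₁ * x) + 1)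
      = (2 * ω₁ ^ 2 / (a₁ ^ 2 + b₁ ^ 2)) * Real.exp (2 * ω₁ * x) /
        ((Real.exp (2 * ω₁ * x) + m) ^ 2 + c ^ 2) := by
    intro x
    have h4 : Real.exp (4 * ω₁ * x) = Real.exp (2 * ω₁ * x) ^ 2 := by
      rw [sq, ← Real.exp_add]; congr 1; ring
    congr 1
    rw [h4, hμ, hmdef, hcdef]
    field_simp
    ring
  have hfun : (fun x : ℝ =>
      (2 * ω₁ ^ 2 / (a₁ ^ 2 + b₁ ^ 2)) * Real.exp (2 * ω₁ * x) /
        (Real.exp (4 * ω₁ * x) + μ * Real.exp (2 * ω₁ * x) + 1))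
      = fun x : ℝ => (2 * ω₁ ^ 2 / (a₁ ^ 2 + b₁ ^ 2)) * Real.exp (2 * ω₁ * x) /
        ((Real.exp (2 * ω₁ * x) + m) ^ 2 + c ^ 2) := funext heq
  have hmc : m / c = (u ^ 2 - 1) / (2 * u) := by
    rw [hmdef, hcdef]
    field_simp
  have hK : (2 * ω₁ ^ 2 / (a₁ ^ 2 + b₁ ^ 2)) / (2 * ω₁ * c) = 3 := by
    rw [hcdef, hω, hu]
    have ha' : a₁ ≠ 0 := ha.ne'
    have hb' : b₁ ≠ 0 := hb.ne'
    have hab : a₁ ^ 2 + b₁ ^ 2 ≠ 0 := by positivity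
    have h1u' : (1 : ℝ) + (a₁ / b₁) ^ 2 ≠ 0 := by positivity
    field_simp
    ring
  have harctan : arctan ((u ^ 2 - 1) / (2 * u)) = 2 * arctan u - π / 2 := by
    have hxy : (u ^ 2 - 1) / (2 * u) * u⁻¹ < 1 := by
      have h1 : (u ^ 2 - 1) / (2 * u) * u⁻¹ = (u ^ 2 - 1) / (2 * u ^ 2) := by
        field_simp
      rw [h1, div_lt_one (by positivity)]
      nlinarith
    have h2 := Real.arctan_add hxy
    have harg : ((u ^ 2 - 1) / (2 * u) + u⁻¹) / (1 - (u ^ 2 - 1) / (2 * u) * u⁻¹) = u := by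
      rw [div_eq_iff]
      · field_simp
        ring
      · intro h
        rw [sub_eq_zero] at h
        rw [← h] at hxy
        exact lt_irrefl _ hxy
    rw [harg, Real.arctan_inv_of_pos hu0] at h2
    linarith
  refine ⟨?_, ?_, ?_⟩
  · rw [hfun]; exact hint
  · rw [hfun, hval, hmc]
    have : 2 * ω₁ ^ 2 / (a₁ ^ 2 + b₁ ^ 2) / (2 * ω₁ * c) = 3 := hK
    rw [show (2 * ω₁ ^ 2 / (a₁ ^ 2 + b₁ ^ 2)) / (2 * ω₁ * c) = 3 from hK]
  · rw [harctan]; ring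
end

section
/- Let a₁ > 0 and b₁ > 0, set u = a₁/b₁, ω₁ = 6 a₁ b₁, μ = 2(u² − 1)/(1 + u²) and θ = 2 arctan u ∈ (0, π), and define g : ℂ → ℂ by g(z) = −(2ω₁²/(a₁² + b₁²)) · e^{2ω₁ z} / (e^{4ω₁ z} + μ e^{2ω₁ z} + 1). Then the zeros of z ↦ e^{4ω₁ z} + μ e^{2ω₁ z} + 1 are exactly the points z_n^{±} = (± i θ + 2π i n)/(2ω₁) with n ∈ ℤ; each z_n^{+} is a simple pole of g with lim_{z→z_n^{+}} (z − z_n^{+}) g(z) = 3i/2, and each z_n^{−} is a simple pole of g with lim_{z→z_n^{−}} (z − z_n^{−}) g(z) = −3i/2. -/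
open Filter Topology Complex

private lemma res_lim (D N : ℂ → ℂ) (z₀ d : ℂ) (hD0 : D z₀ = 0)
    (hd : HasDerivAt D d z₀) (hd0 : d ≠ 0) (hN : ContinuousAt N z₀) :
    Filter.Tendsto (fun w => (w - z₀) * (N w / D w)) (nhdsWithin z₀ {z₀}ᶜ)
      (nhds (N z₀ / d)) := by
  have h1 : Tendsto (slope D z₀) (𝓝[≠] z₀) (𝓝 d) := hasDerivAt_iff_tendsto_slope.mp hd
  have h2 : Tendsto (fun w => (slope D z₀ w)⁻¹) (𝓝[≠] z₀) (𝓝 d⁻¹) := h1.inv₀ hd0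
  have h3 : Tendsto N (𝓝[≠] z₀) (𝓝 (N z₀)) := hN.continuousWithinAt
  have h4 := h3.mul h2
  rw [div_eq_mul_inv]
  refine h4.congr' ?_
  filter_upwards [self_mem_nhdsWithin] with w hw
  have hwne : w ≠ z₀ := hw
  have hw' : w - z₀ ≠ 0 := sub_ne_zero.mpr hwne
  simp only [slope_def_field, hD0, sub_zero]
  rcases eq_or_ne (D w) 0 with h | h
  · simp [h]
  · field_simp

private lemma exp_deriv' (c z : ℂ) :
    HasDerivAt (fun w => Complex.exp (c * w)) (c * Complex.exp (c * z)) z := by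
  simpa [mul_comm] using ((hasDerivAt_id z).const_mul c).cexp

private lemma exp_add_int (x : ℂ) (n : ℤ) :
    Complex.exp (x + 2 * (Real.pi : ℂ) * Complex.I * (n : ℂ)) = Complex.exp x := by
  rw [Complex.exp_add,
    show (2 * (Real.pi : ℂ) * Complex.I * (n : ℂ)) = (n : ℂ) * (2 * (Real.pi : ℂ) * Complex.I) by
      ring,
    Complex.exp_int_mul_two_pi_mul_I, mul_one]

/-- Section IV: the zeros of z ↦ e^{4ω₁z} + μe^{2ω₁z} + 1 are exactly the points
z_n^± = (±iθ + 2πin)/(2ω₁), n ∈ ℤ, where θ = 2 arctan u ∈ (0, π); each z_n^± is a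
simple pole of the complexified phase gradient g with
lim_{z→z_n^±} (z − z_n^±) g(z) = ±3i/2. -/
theorem stmt_13 (a₁ b₁ u ω₁ μ θ : ℝ) (ha : 0 < a₁) (hb : 0 < b₁)
    (hu : u = a₁ / b₁) (hω : ω₁ = 6 * a₁ * b₁)
    (hμ : μ = 2 * (u ^ 2 - 1) / (1 + u ^ 2)) (hθ : θ = 2 * Real.arctan u)
    (g : ℂ → ℂ)
    (hg : ∀ z : ℂ, g z = -(2 * (ω₁ : ℂ) ^ 2 / ((a₁ : ℂ) ^ 2 + (b₁ : ℂ) ^ 2)) *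
      Complex.exp (2 * (ω₁ : ℂ) * z) /
      (Complex.exp (4 * (ω₁ : ℂ) * z) + (μ : ℂ) * Complex.exp (2 * (ω₁ : ℂ) * z) + 1)) :
    (∀ z : ℂ,
      Complex.exp (4 * (ω₁ : ℂ) * z) + (μ : ℂ) * Complex.exp (2 * (ω₁ : ℂ) * z) + 1 = 0 ↔
      ∃ n : ℤ,
        z = ((θ : ℂ) * Complex.I + 2 * (Real.pi : ℂ) * Complex.I * (n : ℂ)) / (2 * (ω₁ : ℂ)) ∨
        z = (-((θ : ℂ) * Complex.I) + 2 * (Real.pi : ℂ) * Complex.I * (n : ℂ)) / (2 * (ω₁ : ℂ))) ∧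
    (∀ n : ℤ,
      Filter.Tendsto
        (fun w : ℂ =>
          (w - ((θ : ℂ) * Complex.I + 2 * (Real.pi : ℂ) * Complex.I * (n : ℂ)) / (2 * (ω₁ : ℂ))) * g w)
        (nhdsWithin
          (((θ : ℂ) * Complex.I + 2 * (Real.pi : ℂ) * Complex.I * (n : ℂ)) / (2 * (ω₁ : ℂ)))
          {(((θ : ℂ) * Complex.I + 2 * (Real.pi : ℂ) * Complex.I * (n : ℂ)) / (2 * (ω₁ : ℂ)))}ᶜ)
        (nhds (3 * Complex.I / 2))) ∧
    (∀ n : ℤ,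
      Filter.Tendsto
        (fun w : ℂ =>
          (w - (-((θ : ℂ) * Complex.I) + 2 * (Real.pi : ℂ) * Complex.I * (n : ℂ)) / (2 * (ω₁ : ℂ))) * g w)
        (nhdsWithin
          ((-((θ : ℂ) * Complex.I) + 2 * (Real.pi : ℂ) * Complex.I * (n : ℂ)) / (2 * (ω₁ : ℂ)))
          {((-((θ : ℂ) * Complex.I) + 2 * (Real.pi : ℂ) * Complex.I * (n : ℂ)) / (2 * (ω₁ : ℂ)))}ᶜ)
        (nhds (-(3 * Complex.I / 2)))) := by
  have hb0 : b₁ ≠ 0 := hb.ne'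
  have ha0 : a₁ ≠ 0 := ha.ne'
  have hu0 : 0 < u := hu ▸ div_pos ha hb
  have h1u : (0:ℝ) < 1 + u ^ 2 := by positivity
  have hsq : Real.sqrt (1 + u ^ 2) ^ 2 = 1 + u ^ 2 := Real.sq_sqrt h1u.le
  have hsqpos : 0 < Real.sqrt (1 + u ^ 2) := Real.sqrt_pos.mpr h1u
  have hsne : Real.sqrt (1 + u ^ 2) ≠ 0 := hsqpos.ne'
  -- real trigonometric identities
  have hθc : Real.cos θ = (1 - u ^ 2) / (1 + u ^ 2) := by
    rw [hθ, Real.cos_two_mul, Real.cos_arctan, div_pow, one_pow, hsq]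
    field_simp
    ring
  have hθs : Real.sin θ = 2 * u / (1 + u ^ 2) := by
    rw [hθ, Real.sin_two_mul, Real.sin_arctan, Real.cos_arctan]
    field_simp
    exact hsq.symm
  have hsinpos : 0 < Real.sin θ := by
    rw [hθs]; positivity
  have hμc : μ = -(2 * Real.cos θ) := by
    rw [hθc, hμ]; field_simp; ring
  have hsinab : (a₁ ^ 2 + b₁ ^ 2) * Real.sin θ = 2 * (a₁ * b₁) := by
    rw [hθs, hu]; field_simp; ring
  -- complex setup
  set ω : ℂ := (ω₁ : ℂ) with hωdef
  have hω0 : ω ≠ 0 := by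
    rw [hωdef]; exact_mod_cast (by rw [hω]; positivity : (0:ℝ) < ω₁).ne'
  have h2ω : 2 * ω ≠ 0 := mul_ne_zero two_ne_zero hω0
  set p : ℂ := Complex.exp ((θ : ℂ) * Complex.I) with hpdef
  set q : ℂ := Complex.exp (-((θ : ℂ) * Complex.I)) with hqdef
  set s : ℂ := ((Real.sin θ : ℝ) : ℂ) with hsdef
  have hs0 : s ≠ 0 := by
    rw [hsdef]; exact_mod_cast hsinpos.ne'
  have hp0 : p ≠ 0 := Complex.exp_ne_zero _
  have hq0 : q ≠ 0 := Complex.exp_ne_zero _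
  have hpq : p * q = 1 := by
    rw [hpdef, hqdef, ← Complex.exp_add, add_neg_cancel, Complex.exp_zero]
  have hpval : p = (Real.cos θ : ℂ) + (Real.sin θ : ℂ) * Complex.I := by
    rw [hpdef, Complex.exp_mul_I, Complex.ofReal_cos, Complex.ofReal_sin]
  have hqval : q = (Real.cos θ : ℂ) - (Real.sin θ : ℂ) * Complex.I := by
    rw [hqdef, show -((θ:ℂ) * Complex.I) = ((-θ : ℝ) : ℂ) * Complex.I by push_cast; ring,
      Complex.exp_mul_I, ← Complex.ofReal_cos, ← Complex.ofReal_sin, Real.cos_neg, Real.sin_neg]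
    push_cast; ring
  have hpsum : p + q = -(μ : ℂ) := by
    rw [hpval, hqval]
    have : (μ : ℂ) = -(2 * (Real.cos θ : ℂ)) := by exact_mod_cast congrArg (Complex.ofReal) hμc
    rw [this]; ring
  have hpsub : p - q = 2 * s * Complex.I := by
    rw [hpval, hqval, hsdef]; ring
  have hpm : 2 * p + (μ : ℂ) = 2 * s * Complex.I := by
    linear_combination hpsub + hpsum
  have hqm : 2 * q + (μ : ℂ) = -(2 * s * Complex.I) := by
    linear_combination (-1 : ℂ) * hpsub + hpsum
  have hAs : ((a₁ : ℂ) ^ 2 + (b₁ : ℂ) ^ 2) * s = 2 * ((a₁ : ℂ) * (b₁ : ℂ)) := by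
    rw [hsdef]; exact_mod_cast congrArg (Complex.ofReal) hsinab
  have hA0 : ((a₁ : ℂ) ^ 2 + (b₁ : ℂ) ^ 2) ≠ 0 := by
    have : (0:ℝ) < a₁ ^ 2 + b₁ ^ 2 := by positivity
    exact_mod_cast (Complex.ofReal_ne_zero.mpr this.ne')
  set C : ℂ := -(2 * ω ^ 2 / ((a₁ : ℂ) ^ 2 + (b₁ : ℂ) ^ 2)) with hCdef
  have hωab : ω = 6 * (a₁ : ℂ) * (b₁ : ℂ) := by
    rw [hωdef, hω]; push_cast; ring
  have hC : C = -(6 * ω * s) := by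
    have h2 : 2 * ω ^ 2 = 6 * ω * s * ((a₁ : ℂ) ^ 2 + (b₁ : ℂ) ^ 2) := by
      rw [hωab]; linear_combination (-36 * (a₁ : ℂ) * (b₁ : ℂ)) * hAs
    rw [hCdef, neg_inj, div_eq_iff hA0]
    linear_combination h2
  -- factorization and periodicity helpers
  have hfact : ∀ E : ℂ, E ^ 2 + (μ : ℂ) * E + 1 = (E - p) * (E - q) := fun E => by
    linear_combination E * hpsum - hpq
  have hE4 : ∀ z : ℂ, Complex.exp (4 * ω * z) = Complex.exp (2 * ω * z) ^ 2 := fun z => by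
    rw [show (4 : ℂ) * ω * z = 2 * ω * z + 2 * ω * z by ring, Complex.exp_add]; ring
  refine ⟨fun z => ?_, fun n => ?_, fun n => ?_⟩
  · rw [hE4 z, hfact (Complex.exp (2 * ω * z)), mul_eq_zero, sub_eq_zero, sub_eq_zero]
    constructor
    · rintro (h | h)
      · rw [hpdef] at h
        obtain ⟨n, hn⟩ := Complex.exp_eq_exp_iff_exists_int.mp h
        exact ⟨n, Or.inl (by rw [eq_div_iff h2ω]; linear_combination hn)⟩
      · rw [hqdef] at h
        obtain ⟨n, hn⟩ := Complex.exp_eq_exp_iff_exists_int.mp h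
        exact ⟨n, Or.inr (by rw [eq_div_iff h2ω]; linear_combination hn)⟩
    · rintro ⟨n, h | h⟩ <;> subst h
      · left
        rw [show 2 * ω * (((θ : ℂ) * Complex.I + 2 * (Real.pi : ℂ) * Complex.I * (n : ℂ)) / (2 * ω))
              = (θ : ℂ) * Complex.I + 2 * (Real.pi : ℂ) * Complex.I * (n : ℂ) by field_simp,
          exp_add_int, hpdef]
      · right
        rw [show 2 * ω * ((-((θ : ℂ) * Complex.I) + 2 * (Real.pi : ℂ) * Complex.I * (n : ℂ)) / (2 * ω))
              = -((θ : ℂ) * Complex.I) + 2 * (Real.pi : ℂ) * Complex.I * (n : ℂ) by field_simp,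
          exp_add_int, hqdef]
  -- the plus-poles
  · set z₀ : ℂ := ((θ : ℂ) * Complex.I + 2 * (Real.pi : ℂ) * Complex.I * (n : ℂ)) / (2 * ω) with hz₀
    have hz2 : 2 * ω * z₀ = (θ : ℂ) * Complex.I + 2 * (Real.pi : ℂ) * Complex.I * (n : ℂ) := by
      rw [hz₀]; field_simp
    have hEp : Complex.exp (2 * ω * z₀) = p := by rw [hz2, exp_add_int, hpdef]
    have hE4p : Complex.exp (4 * ω * z₀) = p ^ 2 := by rw [hE4 z₀, hEp]
    have hD0 : Complex.exp (4 * ω * z₀) + (μ : ℂ) * Complex.exp (2 * ω * z₀) + 1 = 0 := by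
      rw [hE4p, hEp, hfact p]; simp
    set d : ℂ := 4 * ω * p ^ 2 + (μ : ℂ) * (2 * ω * p) with hd
    have hder : HasDerivAt
        (fun z => Complex.exp (4 * ω * z) + (μ : ℂ) * Complex.exp (2 * ω * z) + 1) d z₀ := by
      have := ((exp_deriv' (4 * ω) z₀).add ((exp_deriv' (2 * ω) z₀).const_mul (μ : ℂ))).add_const 1
      rwa [hE4p, hEp] at this
    have hdeq : d = 2 * ω * p * (2 * s * Complex.I) := by
      rw [hd]; linear_combination (2 * ω * p) * hpm
    have hd0 : d ≠ 0 := by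
      rw [hdeq]
      exact mul_ne_zero (mul_ne_zero h2ω hp0)
        (mul_ne_zero (mul_ne_zero two_ne_zero hs0) Complex.I_ne_zero)
    have hNcont : ContinuousAt (fun z => C * Complex.exp (2 * ω * z)) z₀ := by fun_prop
    have main := res_lim
      (fun z => Complex.exp (4 * ω * z) + (μ : ℂ) * Complex.exp (2 * ω * z) + 1)
      (fun z => C * Complex.exp (2 * ω * z)) z₀ d hD0 hder hd0 hNcont
    have hval : C * Complex.exp (2 * ω * z₀) / d = 3 * Complex.I / 2 := by
      rw [hEp, hd, div_eq_iff (hd ▸ hd0)]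
      linear_combination p * hC + (-3 * Complex.I * ω * p) * hpm + (-6 * ω * p * s) * Complex.I_sq
    have h5 : Filter.Tendsto (fun w => (w - z₀) * g w) (nhdsWithin z₀ {z₀}ᶜ)
        (nhds (C * Complex.exp (2 * ω * z₀) / d)) := by
      refine main.congr fun w => ?_
      rw [hg w]
    rwa [hval] at h5
  -- the minus-poles
  · set z₀ : ℂ := (-((θ : ℂ) * Complex.I) + 2 * (Real.pi : ℂ) * Complex.I * (n : ℂ)) / (2 * ω) with hz₀
    have hz2 : 2 * ω * z₀ = -((θ : ℂ) * Complex.I) + 2 * (Real.pi : ℂ) * Complex.I * (n : ℂ) := by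
      rw [hz₀]; field_simp
    have hEq : Complex.exp (2 * ω * z₀) = q := by rw [hz2, exp_add_int, hqdef]
    have hE4q : Complex.exp (4 * ω * z₀) = q ^ 2 := by rw [hE4 z₀, hEq]
    have hD0 : Complex.exp (4 * ω * z₀) + (μ : ℂ) * Complex.exp (2 * ω * z₀) + 1 = 0 := by
      rw [hE4q, hEq, hfact q]; simp
    set d : ℂ := 4 * ω * q ^ 2 + (μ : ℂ) * (2 * ω * q) with hd
    have hder : HasDerivAt
        (fun z => Complex.exp (4 * ω * z) + (μ : ℂ) * Complex.exp (2 * ω * z) + 1) d z₀ := by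
      have := ((exp_deriv' (4 * ω) z₀).add ((exp_deriv' (2 * ω) z₀).const_mul (μ : ℂ))).add_const 1
      rwa [hE4q, hEq] at this
    have hdeq : d = 2 * ω * q * (-(2 * s * Complex.I)) := by
      rw [hd]; linear_combination (2 * ω * q) * hqm
    have hd0 : d ≠ 0 := by
      rw [hdeq]
      exact mul_ne_zero (mul_ne_zero h2ω hq0)
        (neg_ne_zero.mpr (mul_ne_zero (mul_ne_zero two_ne_zero hs0) Complex.I_ne_zero))
    have hNcont : ContinuousAt (fun z => C * Complex.exp (2 * ω * z)) z₀ := by fun_prop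
    have main := res_lim
      (fun z => Complex.exp (4 * ω * z) + (μ : ℂ) * Complex.exp (2 * ω * z) + 1)
      (fun z => C * Complex.exp (2 * ω * z)) z₀ d hD0 hder hd0 hNcont
    have hval : C * Complex.exp (2 * ω * z₀) / d = -(3 * Complex.I / 2) := by
      rw [hEq, hd, div_eq_iff (hd ▸ hd0)]
      linear_combination q * hC + (3 * Complex.I * ω * q) * hqm + (-6 * ω * q * s) * Complex.I_sq
    have h5 : Filter.Tendsto (fun w => (w - z₀) * g w) (nhdsWithin z₀ {z₀}ᶜ)
        (nhds (C * Complex.exp (2 * ω * z₀) / d)) := by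
      refine main.congr fun w => ?_
      rw [hg w]
    rwa [hval] at h5
end

section
/- Let ω₁ > 0 and c ∈ ℝ, and define g : ℂ → ℂ by g(z) = ω₁ (1 − 4 cosh((2/3)(2ω₁ z − c))) / cosh(2ω₁ z − c). Then the zeros of z ↦ cosh(2ω₁ z − c) are exactly the points z_k = (c + i(π/2 + kπ))/(2ω₁) with k ∈ ℤ; each z_k is a simple pole of g, and lim_{z→z_k} (z − z_k) g(z) equals (−1)^{k+1} · (5i/2) if k ≡ 1 (mod 3), and equals (−1)^k · (i/2) otherwise. -/
open Complex Filter

lemma coskpi (k : ℤ) : Complex.cos ((k:ℂ) * (Real.pi:ℂ)) = (-1:ℂ)^k := by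
  have h : Real.cos ((k:ℝ) * Real.pi) = (-1:ℝ)^k := by
    simpa using Real.cos_add_int_mul_pi 0 k
  have : ((k:ℂ) * (Real.pi:ℂ)) = (((k:ℝ) * Real.pi : ℝ) : ℂ) := by push_cast; ring
  rw [this, ← Complex.ofReal_cos, h]
  push_cast
  ring

lemma sinhu (k : ℤ) :
    Complex.sinh (Complex.I * ((Real.pi:ℂ)/2 + (k:ℂ) * (Real.pi:ℂ))) = (-1:ℂ)^k * Complex.I := by
  rw [show Complex.I * ((Real.pi:ℂ)/2 + (k:ℂ) * (Real.pi:ℂ))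
      = ((Real.pi:ℂ)/2 + (k:ℂ) * (Real.pi:ℂ)) * Complex.I by ring,
    Complex.sinh_mul_I, Complex.sin_add, Complex.sin_pi_div_two, Complex.cos_pi_div_two,
    Complex.sin_int_mul_pi, coskpi]
  ring

lemma coshu (k : ℤ) :
    Complex.cosh (Complex.I * ((Real.pi:ℂ)/2 + (k:ℂ) * (Real.pi:ℂ))) = 0 := by
  rw [show Complex.I * ((Real.pi:ℂ)/2 + (k:ℂ) * (Real.pi:ℂ))
      = ((Real.pi:ℂ)/2 + (k:ℂ) * (Real.pi:ℂ)) * Complex.I by ring,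
    Complex.cosh_mul_I, Complex.cos_add, Complex.sin_pi_div_two, Complex.cos_pi_div_two,
    Complex.sin_int_mul_pi]
  ring

lemma cosh23 (k : ℤ) :
    Complex.cosh ((2/3:ℂ) * (Complex.I * ((Real.pi:ℂ)/2 + (k:ℂ) * (Real.pi:ℂ))))
      = Complex.cos ((Real.pi:ℂ)/3 + 2*(((k % 3 : ℤ)):ℂ)*(Real.pi:ℂ)/3) := by
  have hk : (k:ℂ) = (((k % 3 : ℤ)):ℂ) + 3*(((k / 3 : ℤ)):ℂ) := by
    exact_mod_cast (Int.emod_add_mul_ediv k 3).symm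
  rw [show (2/3:ℂ) * (Complex.I * ((Real.pi:ℂ)/2 + (k:ℂ) * (Real.pi:ℂ)))
      = (((Real.pi:ℂ)/3 + 2*(((k % 3 : ℤ)):ℂ)*(Real.pi:ℂ)/3) + ((k / 3 : ℤ):ℂ)*(2*(Real.pi:ℂ))) * Complex.I by
      rw [hk]; ring,
    Complex.cosh_mul_I, Complex.cos_add_int_mul_two_pi]

lemma coshval (k : ℤ) :
    Complex.cosh ((2/3:ℂ) * (Complex.I * ((Real.pi:ℂ)/2 + (k:ℂ) * (Real.pi:ℂ))))
      = if k % 3 = 1 then -1 else 1/2 := by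
  rw [cosh23]
  have hr : k % 3 = 0 ∨ k % 3 = 1 ∨ k % 3 = 2 := by omega
  have hhalf : Complex.cos ((Real.pi:ℂ)/3) = 1/2 := by
    rw [show ((Real.pi:ℂ)/3) = ((Real.pi/3 : ℝ):ℂ) by push_cast; ring, ← Complex.ofReal_cos,
      Real.cos_pi_div_three]
    norm_num
  rcases hr with h | h | h
  · rw [h, if_neg (by norm_num : ¬(0:ℤ)=1),
      show (Real.pi:ℂ)/3 + 2*(((0:ℤ)):ℂ)*(Real.pi:ℂ)/3 = (Real.pi:ℂ)/3 by push_cast; ring]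
    exact hhalf
  · rw [h, if_pos rfl,
      show (Real.pi:ℂ)/3 + 2*(((1:ℤ)):ℂ)*(Real.pi:ℂ)/3 = (Real.pi:ℂ) by push_cast; ring,
      Complex.cos_pi]
  · rw [h, if_neg (by norm_num : ¬(2:ℤ)=1),
      show (Real.pi:ℂ)/3 + 2*(((2:ℤ)):ℂ)*(Real.pi:ℂ)/3 = 2*(Real.pi:ℂ) - (Real.pi:ℂ)/3 by push_cast; ring,
      Complex.cos_two_pi_sub]
    exact hhalf

lemma resval (ω₁ : ℝ) (hω : ω₁ ≠ 0) (k : ℤ) :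
    (ω₁:ℂ) * (1 - 4 * (if k % 3 = 1 then (-1:ℂ) else 1/2)) * (((-1:ℂ)^k * Complex.I) * (2*(ω₁:ℂ)))⁻¹
      = if k % 3 = 1 then (-1 : ℂ) ^ (k + 1) * (5 * Complex.I / 2)
        else (-1 : ℂ) ^ k * (Complex.I / 2) := by
  have hω' : (ω₁:ℂ) ≠ 0 := by exact_mod_cast hω
  have hI := Complex.I_ne_zero
  have h2 : (-1:ℂ)^(k+1) = -((-1:ℂ)^k) := by
    rw [zpow_add₀ (by norm_num : (-1:ℂ) ≠ 0)]; ring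
  rcases Int.even_or_odd k with hk | hk
  · have h1 : (-1:ℂ)^k = 1 := hk.neg_one_zpow
    rw [h1] at h2
    by_cases h : k % 3 = 1
    · simp only [h, h1, h2, if_true]
      field_simp
      linear_combination (5:ℂ) * Complex.I_sq
    · simp only [h, h1, h2, if_false]
      field_simp
      linear_combination (-2:ℂ) * Complex.I_sq
  · have h1 : (-1:ℂ)^k = -1 := hk.neg_one_zpow
    rw [h1] at h2
    by_cases h : k % 3 = 1
    · simp only [h, h1, h2, if_true]
      field_simp
      linear_combination (-5:ℂ) * Complex.I_sq
    · simp only [h, h1, h2, if_false]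
      field_simp
      linear_combination (2:ℂ) * Complex.I_sq

/-- Section V (width ratio 1/3, component q₁): the zeros of z ↦ cosh(2ω₁z − c)
are exactly z_k = (c + i(π/2 + kπ))/(2ω₁), k ∈ ℤ; each z_k is a simple pole of
g(z) = ω₁(1 − 4cosh((2/3)(2ω₁z − c)))/cosh(2ω₁z − c), with residue
(−1)^{k+1}·5i/2 if k ≡ 1 (mod 3), and (−1)ᵏ·i/2 otherwise. -/
theorem stmt_15 (ω₁ c : ℝ) (hω : 0 < ω₁) (g : ℂ → ℂ)
    (hg : ∀ z : ℂ, g z = (ω₁ : ℂ) *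
      (1 - 4 * Complex.cosh ((2 / 3) * (2 * (ω₁ : ℂ) * z - (c : ℂ)))) /
      Complex.cosh (2 * (ω₁ : ℂ) * z - (c : ℂ))) :
    (∀ z : ℂ, Complex.cosh (2 * (ω₁ : ℂ) * z - (c : ℂ)) = 0 ↔
      ∃ k : ℤ, z = ((c : ℂ) + Complex.I * ((Real.pi : ℂ) / 2 + (k : ℂ) * (Real.pi : ℂ))) /
        (2 * (ω₁ : ℂ))) ∧
    ∀ k : ℤ,
      Filter.Tendsto
        (fun w : ℂ =>
          (w - ((c : ℂ) + Complex.I * ((Real.pi : ℂ) / 2 + (k : ℂ) * (Real.pi : ℂ))) /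
            (2 * (ω₁ : ℂ))) * g w)
        (nhdsWithin
          (((c : ℂ) + Complex.I * ((Real.pi : ℂ) / 2 + (k : ℂ) * (Real.pi : ℂ))) / (2 * (ω₁ : ℂ)))
          {(((c : ℂ) + Complex.I * ((Real.pi : ℂ) / 2 + (k : ℂ) * (Real.pi : ℂ))) / (2 * (ω₁ : ℂ)))}ᶜ)
        (nhds (if k % 3 = 1 then (-1 : ℂ) ^ (k + 1) * (5 * Complex.I / 2)
          else (-1 : ℂ) ^ k * (Complex.I / 2))) := by
  have hω' : (ω₁:ℂ) ≠ 0 := by exact_mod_cast hω.ne'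
  have h2ω : (2*(ω₁:ℂ)) ≠ 0 := by simpa using hω'
  constructor
  · intro z
    rw [← Complex.cos_mul_I, Complex.cos_eq_zero_iff]
    constructor
    · rintro ⟨n, hn⟩
      refine ⟨-n-1, ?_⟩
      rw [eq_div_iff h2ω]
      push_cast
      linear_combination (-Complex.I) * hn + (2*(ω₁:ℂ)*z - (c:ℂ)) * Complex.I_sq
    · rintro ⟨n, rfl⟩
      refine ⟨-n-1, ?_⟩
      have harg : 2*(ω₁:ℂ) * (((c:ℂ) + Complex.I * ((Real.pi:ℂ)/2 + (n:ℂ)*(Real.pi:ℂ)))/(2*(ω₁:ℂ))) - (c:ℂ)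
          = Complex.I * ((Real.pi:ℂ)/2 + (n:ℂ)*(Real.pi:ℂ)) := by
        field_simp
        ring
      rw [harg]
      push_cast
      linear_combination ((Real.pi:ℂ)/2 + (n:ℂ)*(Real.pi:ℂ)) * Complex.I_sq
  · intro k
    have harg : 2*(ω₁:ℂ) * (((c:ℂ) + Complex.I * ((Real.pi:ℂ)/2 + (k:ℂ)*(Real.pi:ℂ)))/(2*(ω₁:ℂ))) - (c:ℂ)
        = Complex.I * ((Real.pi:ℂ)/2 + (k:ℂ)*(Real.pi:ℂ)) := by
      field_simp
      ring
    have hderiv : HasDerivAt (fun w : ℂ => Complex.cosh (2*(ω₁:ℂ)*w - (c:ℂ)))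
        (Complex.sinh (Complex.I * ((Real.pi:ℂ)/2 + (k:ℂ)*(Real.pi:ℂ))) * (2*(ω₁:ℂ)))
        (((c:ℂ) + Complex.I * ((Real.pi:ℂ)/2 + (k:ℂ)*(Real.pi:ℂ)))/(2*(ω₁:ℂ))) := by
      have h1 : HasDerivAt (fun w : ℂ => 2*(ω₁:ℂ)*w - (c:ℂ)) (2*(ω₁:ℂ))
          (((c:ℂ) + Complex.I * ((Real.pi:ℂ)/2 + (k:ℂ)*(Real.pi:ℂ)))/(2*(ω₁:ℂ))) := by
        simpa using ((hasDerivAt_id _).const_mul (2*(ω₁:ℂ))).sub_const (c:ℂ)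
      have := h1.ccosh
      rw [harg] at this
      simpa using this
    have hd0 : Complex.sinh (Complex.I * ((Real.pi:ℂ)/2 + (k:ℂ)*(Real.pi:ℂ))) * (2*(ω₁:ℂ)) ≠ 0 := by
      rw [sinhu]
      exact mul_ne_zero (mul_ne_zero (zpow_ne_zero _ (by norm_num)) Complex.I_ne_zero) h2ω
    have hslope := hasDerivAt_iff_tendsto_slope.mp hderiv
    have hinv := hslope.inv₀ hd0
    have hcont : Filter.Tendsto
        (fun w : ℂ => (ω₁:ℂ) * (1 - 4 * Complex.cosh ((2/3:ℂ)*(2*(ω₁:ℂ)*w - (c:ℂ)))))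
        (nhdsWithin (((c:ℂ) + Complex.I * ((Real.pi:ℂ)/2 + (k:ℂ)*(Real.pi:ℂ)))/(2*(ω₁:ℂ)))
          {(((c:ℂ) + Complex.I * ((Real.pi:ℂ)/2 + (k:ℂ)*(Real.pi:ℂ)))/(2*(ω₁:ℂ)))}ᶜ)
        (nhds ((ω₁:ℂ) * (1 - 4 * Complex.cosh ((2/3:ℂ)*(Complex.I * ((Real.pi:ℂ)/2 + (k:ℂ)*(Real.pi:ℂ))))))) := by
      have hc : Continuous fun w : ℂ =>
          (ω₁:ℂ) * (1 - 4 * Complex.cosh ((2/3:ℂ)*(2*(ω₁:ℂ)*w - (c:ℂ)))) := by fun_prop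
      have ht := (hc.tendsto (((c:ℂ) + Complex.I * ((Real.pi:ℂ)/2 + (k:ℂ)*(Real.pi:ℂ)))/(2*(ω₁:ℂ)))).mono_left
        (nhdsWithin_le_nhds (s := {(((c:ℂ) + Complex.I * ((Real.pi:ℂ)/2 + (k:ℂ)*(Real.pi:ℂ)))/(2*(ω₁:ℂ)))}ᶜ))
      rw [harg] at ht
      exact ht
    have hmul := hcont.mul hinv
    have hval : (ω₁:ℂ) * (1 - 4 * Complex.cosh ((2/3:ℂ)*(Complex.I * ((Real.pi:ℂ)/2 + (k:ℂ)*(Real.pi:ℂ)))))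
        * (Complex.sinh (Complex.I * ((Real.pi:ℂ)/2 + (k:ℂ)*(Real.pi:ℂ))) * (2*(ω₁:ℂ)))⁻¹
        = if k % 3 = 1 then (-1 : ℂ) ^ (k + 1) * (5 * Complex.I / 2)
          else (-1 : ℂ) ^ k * (Complex.I / 2) := by
      rw [coshval, sinhu]
      exact resval ω₁ hω.ne' k
    rw [← hval]
    refine hmul.congr fun w => ?_
    have hz0val : Complex.cosh (2*(ω₁:ℂ) * (((c:ℂ) + Complex.I * ((Real.pi:ℂ)/2 + (k:ℂ)*(Real.pi:ℂ)))/(2*(ω₁:ℂ))) - (c:ℂ)) = 0 := by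
      rw [harg]; exact coshu k
    rw [hg w, slope_def_field, hz0val, sub_zero, inv_div]
    ring
end

section
/- Let ω ∈ ℂ and y ∈ ℂ satisfy e^{y} + e^{−y} = 0 and P₀(y) = 0, where P₀(y) = (1−ω)²(e^{(1+ω)y} + e^{−(1+ω)y}) + (1+ω)²(e^{(1−ω)y} + e^{−(1−ω)y}) + 8ω. Then P₁(y) = 0, where P₁(y) = 2(−2−ω+ω²)(e^{(1−ω)y} + e^{−(1−ω)y}) + 2(−2+ω+ω²)(e^{(1+ω)y} + e^{−(1+ω)y}) + 3ω(ω²−1)(e^{2y} + e^{−2y}) + 2ω(−7+3ω²). -/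
/-- Appendix C: every common zero of e^y + e^{−y} and
P₀(y) = (1−ω)²(e^{(1+ω)y} + e^{−(1+ω)y}) + (1+ω)²(e^{(1−ω)y} + e^{−(1−ω)y}) + 8ω
is automatically a zero of
P₁(y) = 2(−2−ω+ω²)(e^{(1−ω)y} + e^{−(1−ω)y}) + 2(−2+ω+ω²)(e^{(1+ω)y} + e^{−(1+ω)y})
        + 3ω(ω²−1)(e^{2y} + e^{−2y}) + 2ω(−7+3ω²). -/
theorem stmt_16 (ω y : ℂ)
    (h1 : Complex.exp y + Complex.exp (-y) = 0)
    (h2 : (1 - ω) ^ 2 * (Complex.exp ((1 + ω) * y) + Complex.exp (-((1 + ω) * y))) +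
        (1 + ω) ^ 2 * (Complex.exp ((1 - ω) * y) + Complex.exp (-((1 - ω) * y))) +
        8 * ω = 0) :
    2 * (-2 - ω + ω ^ 2) * (Complex.exp ((1 - ω) * y) + Complex.exp (-((1 - ω) * y))) +
      2 * (-2 + ω + ω ^ 2) * (Complex.exp ((1 + ω) * y) + Complex.exp (-((1 + ω) * y))) +
      3 * ω * (ω ^ 2 - 1) * (Complex.exp (2 * y) + Complex.exp (-(2 * y))) +
      2 * ω * (-7 + 3 * ω ^ 2) = 0 := by
  have e1 : Complex.exp ((1 + ω) * y) = Complex.exp y * Complex.exp (ω * y) := by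
    rw [← Complex.exp_add]; ring_nf
  have e2 : Complex.exp (-((1 + ω) * y)) = Complex.exp (-y) * Complex.exp (-(ω * y)) := by
    rw [← Complex.exp_add]; ring_nf
  have e3 : Complex.exp ((1 - ω) * y) = Complex.exp y * Complex.exp (-(ω * y)) := by
    rw [← Complex.exp_add]; ring_nf
  have e4 : Complex.exp (-((1 - ω) * y)) = Complex.exp (-y) * Complex.exp (ω * y) := by
    rw [← Complex.exp_add]; ring_nf
  have e5 : Complex.exp (2 * y) = Complex.exp y * Complex.exp y := by
    rw [← Complex.exp_add]; ring_nf
  have e6 : Complex.exp (-(2 * y)) = Complex.exp (-y) * Complex.exp (-y) := by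
    rw [← Complex.exp_add]; ring_nf
  have h3 : Complex.exp y * Complex.exp (-y) = 1 := by
    rw [← Complex.exp_add]; simp
  rw [e1, e2, e3, e4] at h2
  rw [e1, e2, e3, e4, e5, e6]
  linear_combination (-1 : ℂ) * h2 +
    (3 * (ω ^ 2 - 1) * (Complex.exp (ω * y) + Complex.exp (-(ω * y))) +
      3 * ω * (ω ^ 2 - 1) * (Complex.exp y + Complex.exp (-y))) * h1 -
    6 * ω * (ω ^ 2 - 1) * h3
end
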